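/- arXiv:1512.00116 — 4 statements merged into one kernel-verified Lean document; each statement's English description precedes it below -/
import Mathlib

section
/- For strictly decreasing λ ∈ (1/2+ℤ)^n, the character of the Euler characteristic module E(λ) of q(n) satisfies ch E(λ) = 2^{⌈n/2⌉} s_{ρ_n}(x_1,…,x_n) s_{λ-ρ_n}(x_1,…,x_n); that is, 2^{⌈n/2⌉} Σ_{w ∈ S_n} w( x^λ ∏_{i<j} (x_i+x_j)/(x_i-x_j) ) = 2^{⌈n/2⌉} s_{ρ_n}(x) s_{λ-ρ_n}(x). -/
/-!
Write `x_i = y_i²`. Since `(x_i + x_j)/(x_i - x_j) = (x_i² - x_j²)/(x_i - x_j)²`, the product over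
`i < j` is `a_{4ρ}/a_{2ρ}²`, where `a_e = Σ_w sign(w) y^{w e}` is the alternant and `a_{cρ}` is a
Vandermonde determinant in the `y_i^c`. Substituting `x ↦ x ∘ w` multiplies the numerator by
`sign w` and leaves the squared denominator unchanged, so the sum over `w` is
`a_{4ρ}/a_{2ρ}² · a_e = (a_{4ρ}/a_{2ρ}) · (a_e/a_{2ρ})`.
-/

open Finset

noncomputable section

/-- Field of rational functions in variables `y_1,…,y_n` over `ℚ`, where `x_i = y_i²`
(so that half-integer powers of the `x_i` make sense as integer powers of `y_i`). -/
abbrev RF (n : ℕ) := FractionRing (MvPolynomial (Fin n) ℚ)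

def yv (n : ℕ) (i : Fin n) : RF n :=
  algebraMap (MvPolynomial (Fin n) ℚ) (RF n) (MvPolynomial.X i)

/-- The signed symmetrization `Σ_{w∈S_n} (-1)^{ℓ(w)} w(x^e)` written in the `y`
variables: `Σ_w sign(w) ∏_i y_{w(i)}^{e_i}` (here `e_i = 2·(exponent of x_i)`). -/
def signedSum (n : ℕ) (e : Fin n → ℤ) : RF n :=
  ∑ w : Equiv.Perm (Fin n), ((Equiv.Perm.sign w : ℤ) : RF n) * ∏ i, yv n (w i) ^ e i

open Matrix Equiv

section Vandermonde

variable {R : Type*} [CommRing R] {n : ℕ}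

theorem prod_filter_lt_eq_prod_Ioi {M : Type*} [CommMonoid M] (f : Fin n → Fin n → M) :
    ∏ p ∈ univ.filter (fun p : Fin n × Fin n => p.1 < p.2), f p.1 p.2 =
      ∏ i, ∏ j ∈ Ioi i, f i j := by
  rw [← univ_product_univ, prod_filter, prod_product]
  refine prod_congr rfl fun i _ => ?_
  rw [← prod_filter]
  congr 1
  ext j
  simp

/-- Oriented as `v i - v j` for `i < j`, opposite to Mathlib's `det_vandermonde`. -/
def vandermondeProd (v : Fin n → R) : R :=
  ∏ p ∈ univ.filter (fun p : Fin n × Fin n => p.1 < p.2), (v p.1 - v p.2)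

theorem vandermondeProd_eq_det_neg (v : Fin n → R) :
    vandermondeProd v = det (vandermonde (-v)) := by
  rw [det_vandermonde, vandermondeProd, prod_filter_lt_eq_prod_Ioi (fun i j => v i - v j)]
  simp only [Pi.neg_apply, neg_sub_neg]

theorem vandermondeProd_eq_det_rev (v : Fin n → R) :
    vandermondeProd v = det (vandermonde (v ∘ Fin.rev)) := by
  rw [det_vandermonde, vandermondeProd,
    ← prod_filter_lt_eq_prod_Ioi (fun i j => (v ∘ Fin.rev) j - (v ∘ Fin.rev) i)]
  exact prod_nbij' (fun p => (p.2.rev, p.1.rev)) (fun p => (p.2.rev, p.1.rev))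
    (by simp) (by simp) (by simp) (by simp) (by simp)

theorem vandermondeProd_comp_perm (v : Fin n → R) (σ : Perm (Fin n)) :
    vandermondeProd (v ∘ σ) = Perm.sign σ * vandermondeProd v := by
  rw [vandermondeProd_eq_det_neg, vandermondeProd_eq_det_neg, ← det_permute]
  rfl

theorem vandermondeProd_ne_zero [IsDomain R] {v : Fin n → R} (hv : Function.Injective v) :
    vandermondeProd v ≠ 0 := by
  rw [vandermondeProd_eq_det_neg, det_vandermonde_ne_zero_iff]
  exact neg_injective.comp hv

theorem sum_sign_mul_prod_pow_rho (v : Fin n → R) :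
    ∑ σ : Perm (Fin n), (Perm.sign σ : R) * ∏ i, v (σ i) ^ (n - 1 - (i : ℕ)) =
      vandermondeProd v := by
  have hrev : (of fun i j : Fin n => v i ^ (n - 1 - (j : ℕ))).submatrix Fin.revPerm Fin.revPerm =
      vandermonde (v ∘ Fin.rev) := by
    ext i j
    simp only [submatrix_apply, of_apply, Fin.revPerm_apply, vandermonde_apply,
      Function.comp_apply, Fin.val_rev]
    congr 1
    omega
  rw [vandermondeProd_eq_det_rev, ← hrev, det_submatrix_equiv_self, det_apply]
  simp only [Units.smul_def, zsmul_eq_mul, of_apply]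

end Vandermonde

section Alternant

variable {K : Type*} [Field K] {n : ℕ}

def alternant (y : Fin n → K) (e : Fin n → ℤ) : K :=
  ∑ σ : Perm (Fin n), (Perm.sign σ : K) * ∏ i, y (σ i) ^ e i

theorem alternant_mul_rho (y : Fin n → K) (c : ℕ) :
    alternant y (fun i => c * ((n : ℤ) - 1 - (i : ℕ))) = vandermondeProd (fun i => y i ^ c) := by
  rw [← sum_sign_mul_prod_pow_rho]
  refine sum_congr rfl fun σ _ => congrArg _ (prod_congr rfl fun i _ => ?_)
  have hi := i.isLt
  rw [← pow_mul, ← zpow_natCast]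
  congr 1
  push_cast [Nat.sub_sub, Nat.cast_sub (show 1 + (i : ℕ) ≤ n by omega)]
  ring

theorem vandermondeProd_sq (v : Fin n → K) :
    vandermondeProd (fun i => v i ^ 2) =
      (∏ p ∈ univ.filter (fun p : Fin n × Fin n => p.1 < p.2), (v p.1 + v p.2)) *
        vandermondeProd v := by
  rw [vandermondeProd, vandermondeProd, ← prod_mul_distrib]
  exact prod_congr rfl fun p _ => by ring

theorem prod_add_div_sub_eq_vandermondeProd (v : Fin n → K) (hv : Function.Injective v) :
    ∏ p ∈ univ.filter (fun p : Fin n × Fin n => p.1 < p.2), (v p.1 + v p.2) / (v p.1 - v p.2) =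
      vandermondeProd (fun i => v i ^ 2) / vandermondeProd v ^ 2 := by
  rw [prod_div_distrib, vandermondeProd_sq, sq, mul_div_mul_right _ _ (vandermondeProd_ne_zero hv)]
  rfl

theorem sum_perm_mul_prod_add_div_sub_eq (y : Fin n → K) (hy : Function.Injective fun i => y i ^ 2)
    (e : Fin n → ℤ) :
    ∑ w : Perm (Fin n), (∏ i, y (w i) ^ e i) *
        ∏ p ∈ univ.filter (fun p : Fin n × Fin n => p.1 < p.2),
          ((y (w p.1) ^ 2 + y (w p.2) ^ 2) / (y (w p.1) ^ 2 - y (w p.2) ^ 2)) =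
      alternant y (fun i => 4 * ((n : ℤ) - 1 - (i : ℕ))) /
          alternant y (fun i => 2 * ((n : ℤ) - 1 - (i : ℕ))) *
        (alternant y e / alternant y (fun i => 2 * ((n : ℤ) - 1 - (i : ℕ)))) := by
  set x : Fin n → K := fun i => y i ^ 2
  have h2 : alternant y (fun i => 2 * ((n : ℤ) - 1 - (i : ℕ))) = vandermondeProd x := by
    exact_mod_cast alternant_mul_rho y 2
  have h4 : alternant y (fun i => 4 * ((n : ℤ) - 1 - (i : ℕ))) =
      vandermondeProd fun i => x i ^ 2 := by
    simp only [x, ← pow_mul]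
    exact_mod_cast alternant_mul_rho y 4
  have hterm (w : Perm (Fin n)) :
      ∏ p ∈ univ.filter (fun p : Fin n × Fin n => p.1 < p.2),
          ((y (w p.1) ^ 2 + y (w p.2) ^ 2) / (y (w p.1) ^ 2 - y (w p.2) ^ 2)) =
        Perm.sign w * (vandermondeProd (fun i => x i ^ 2) / vandermondeProd x ^ 2) := by
    have hsign : ((Perm.sign w : ℤ) : K) ^ 2 = 1 := by
      rcases Int.units_eq_one_or (Perm.sign w) with h | h <;> simp [h]
    refine (prod_add_div_sub_eq_vandermondeProd (x ∘ w) (hy.comp w.injective)).trans ?_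
    rw [show (fun i => (x ∘ w) i ^ 2) = (fun i => x i ^ 2) ∘ w from rfl,
      vandermondeProd_comp_perm, vandermondeProd_comp_perm, mul_pow, hsign, one_mul, mul_div_assoc]
  simp only [hterm]
  rw [h2, h4, alternant, mul_comm, div_mul_div_comm, ← sq, mul_div_assoc, sum_mul]
  refine sum_congr rfl fun w _ => ?_
  ring

end Alternant

theorem yv_sq_injective (n : ℕ) : Function.Injective fun i => yv n i ^ 2 := by
  intro i j hij
  simp only [yv, ← map_pow] at hij
  rw [(IsFractionRing.injective (MvPolynomial (Fin n) ℚ) (RF n)).eq_iff,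
    MvPolynomial.X_pow_eq_monomial, MvPolynomial.X_pow_eq_monomial,
    MvPolynomial.monomial_left_inj one_ne_zero,
    Finsupp.single_left_inj two_ne_zero] at hij
  exact hij

theorem euler_character_formula_general (n : ℕ) (a : Fin n → ℤ) :
    ∑ w : Equiv.Perm (Fin n),
        (∏ i, yv n (w i) ^ (2 * a i + 1 : ℤ)) *
          ∏ p ∈ Finset.univ.filter (fun p : Fin n × Fin n => p.1 < p.2),
            ((yv n (w p.1) ^ 2 + yv n (w p.2) ^ 2) /
              (yv n (w p.1) ^ 2 - yv n (w p.2) ^ 2))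
      = (signedSum n (fun i => 4 * ((n : ℤ) - 1 - (i : ℕ)))
            / signedSum n (fun i => 2 * ((n : ℤ) - 1 - (i : ℕ))))
        * (signedSum n (fun i => 2 * a i + 1)
            / signedSum n (fun i => 2 * ((n : ℤ) - 1 - (i : ℕ)))) :=
  sum_perm_mul_prod_add_div_sub_eq (yv n) (yv_sq_injective n) (fun i => 2 * a i + 1)

/-- Character formula for the Euler characteristic module `E(λ)` of `q(n)`, for
strictly decreasing half-odd-integer `λ` with `λ_i = a_i + 1/2`:
`Σ_{w∈S_n} w( x^λ ∏_{i<j} (x_i+x_j)/(x_i-x_j) ) = s_{ρ_n}(x) · s_{λ-ρ_n}(x)`,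
where `s_μ(x) = Σ_w (-1)^{ℓ(w)} w(x^{μ+ρ_n}) / Σ_w (-1)^{ℓ(w)} w(x^{ρ_n})`
(equivalently `ch E(λ) = 2^{⌈n/2⌉} s_{ρ_n} s_{λ-ρ_n}`). -/
theorem euler_character_formula (n : ℕ) (hn : 1 ≤ n) (a : Fin n → ℤ)
    (hdec : ∀ i j : Fin n, i < j → ((a j : ℚ) + 1/2) < ((a i : ℚ) + 1/2)) :
    ∑ w : Equiv.Perm (Fin n),
        (∏ i, yv n (w i) ^ (2 * a i + 1 : ℤ)) *
          ∏ p ∈ Finset.univ.filter (fun p : Fin n × Fin n => p.1 < p.2),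
            ((yv n (w p.1) ^ 2 + yv n (w p.2) ^ 2) /
              (yv n (w p.1) ^ 2 - yv n (w p.2) ^ 2))
      = (signedSum n (fun i => 4 * ((n : ℤ) - 1 - (i : ℕ)))
            / signedSum n (fun i => 2 * ((n : ℤ) - 1 - (i : ℕ))))
        * (signedSum n (fun i => 2 * a i + 1)
            / signedSum n (fun i => 2 * ((n : ℤ) - 1 - (i : ℕ)))) :=
  euler_character_formula_general n a

end
end

section
/- In the free ℚ(q)-module on basis v_r (r ∈ 1/2+ℤ), consider the n=2 tensor square modulo the relations: v_r⊗v_r, v_r⊗v_s + q v_s⊗v_r for r > s with r+s ≠ 0, v_r⊗v_{-r} + q(v_{r-1}⊗v_{1-r} + v_{1-r}⊗v_{r-1}) + q² v_{-r}⊗v_r for r > 1/2, and v_{1/2}⊗v_{-1/2} + q² v_{-1/2}⊗v_{1/2}. Then in the quotient, the images of v_r⊗v_s for r < s form a spanning set, and more precisely the image of v_r⊗v_s for r > s is (up to the stated signs and powers of q) a q·ℤ[q]-linear combination of images of v_{r'}⊗v_{s'} with r' < s'. -/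
noncomputable section
open Finset

/-- Half-odd-integers. -/
abbrev HO : Type := {x : ℚ // ∃ k : ℤ, x = k + 1/2}

def HO.neg (r : HO) : HO :=
  ⟨-r.val, by obtain ⟨k, hk⟩ := r.2; exact ⟨-k - 1, by rw [hk]; push_cast; ring⟩⟩

def HO.sub1 (r : HO) : HO :=
  ⟨r.val - 1, by obtain ⟨k, hk⟩ := r.2; exact ⟨k - 1, by rw [hk]; push_cast; ring⟩⟩

def HO.half : HO := ⟨1/2, 0, by norm_num⟩

/-- The base field `ℚ(q)`. -/
abbrev Kq : Type := RatFunc ℚ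

def qq : Kq := RatFunc.X

/-- The `n = 2` tensor space `𝕋² = 𝕍 ⊗ 𝕍`, as the free `ℚ(q)`-module on pairs. -/
abbrev T2 : Type := (HO × HO) →₀ Kq

/-- The monomial `v_r ⊗ v_s`. -/
def Mv (p : HO × HO) : T2 := Finsupp.single p 1

/-- The generators of `𝕂²`. -/
def Kgen : Set T2 :=
  {x | ∃ r : HO, x = Mv (r, r)} ∪
  {x | ∃ r s : HO, s < r ∧ r.val + s.val ≠ 0 ∧ x = Mv (r, s) + qq • Mv (s, r)} ∪
  {x | ∃ r : HO, (1 : ℚ)/2 < r.val ∧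
      x = Mv (r, HO.neg r)
        + qq • (Mv (HO.sub1 r, HO.neg (HO.sub1 r)) + Mv (HO.neg (HO.sub1 r), HO.sub1 r))
        + qq ^ 2 • Mv (HO.neg r, r)} ∪
  {x | x = Mv (HO.half, HO.neg HO.half) + qq ^ 2 • Mv (HO.neg HO.half, HO.half)}

/-- The submodule `𝕂² ⊆ 𝕋²`. -/
def Ksub : Submodule Kq T2 := Submodule.span Kq Kgen

/-- The quotient `𝕋²/𝕂²`. -/
abbrev Quot2 : Type := T2 ⧸ Ksub

/-- The canonical projection `π`. -/
def piq (x : T2) : Quot2 := Submodule.Quotient.mk x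

/-
Regard `𝕋²/𝕂²` as a `ℤ[q]`-module through `ℤ[q] → ℚ(q)` and let
`N = q · span_{ℤ[q]} {π(v_μ) : μ₁ < μ₂}`. The relations give `π(v_r ⊗ v_r) = 0` and
`π(v_r ⊗ v_s) = -q π(v_s ⊗ v_r)` for `r > s`, `r + s ≠ 0`, so these lie in `N`. The two remaining
families express `π(v_r ⊗ v_{-r})`, `r > 0`, as `-q π(v_{r-1} ⊗ v_{1-r})` plus elements of `N`, so
induction on `r ∈ 1/2 + ℕ` puts it in `N` as well. Since the `π(v_p)` span the quotient over `ℚ(q)`,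
so do the increasing ones.
-/

open Polynomial

def ofIntPoly : ℤ[X] →+* Kq := (algebraMap ℚ[X] Kq).comp (mapRingHom (Int.castRingHom ℚ))

lemma ofIntPoly_X : ofIntPoly X = qq := by simp [ofIntPoly, qq, RatFunc.algebraMap_X]

instance : Module ℤ[X] Quot2 := Module.compHom Quot2 ofIntPoly

lemma intPoly_smul_def (d : ℤ[X]) (x : Quot2) : d • x = ofIntPoly d • x := rfl

lemma X_smul_eq_qq_smul (x : Quot2) : (X : ℤ[X]) • x = qq • x := by
  rw [intPoly_smul_def, ofIntPoly_X]

lemma HO.exists_nat_of_pos {r : HO} (hr : 0 < r.val) : ∃ k : ℕ, r.val = k + 1 / 2 := by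
  obtain ⟨k, hk⟩ := r.2
  lift k to ℕ using (by rw [hk] at hr; exact_mod_cast (show (-1 : ℚ) < k by linarith))
  exact ⟨k, by rw [hk]; push_cast; rfl⟩

lemma HO.neg_lt_self {r : HO} (hr : 0 < r.val) : r.neg < r :=
  show -r.val < r.val by linarith

lemma piq_eq_zero_of_mem_Kgen {x : T2} (hx : x ∈ Kgen) : piq x = 0 :=
  (Submodule.Quotient.mk_eq_zero _).2 (Submodule.subset_span hx)

lemma piq_add (x y : T2) : piq (x + y) = piq x + piq y := rfl

lemma piq_smul (a : Kq) (x : T2) : piq (a • x) = a • piq x := rfl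

lemma piq_diag (r : HO) : piq (Mv (r, r)) = 0 :=
  piq_eq_zero_of_mem_Kgen (.inl (.inl (.inl ⟨r, rfl⟩)))

lemma piq_of_lt {r s : HO} (h : s < r) (hrs : r.val + s.val ≠ 0) :
    piq (Mv (r, s)) = (-X : ℤ[X]) • piq (Mv (s, r)) := by
  have h0 := piq_eq_zero_of_mem_Kgen (.inl (.inl (.inr ⟨r, s, h, hrs, rfl⟩)))
  rw [piq_add, piq_smul, ← X_smul_eq_qq_smul] at h0
  rw [neg_smul]
  exact eq_neg_of_add_eq_zero_left h0

lemma piq_neg_of_half_lt {r : HO} (h : 1 / 2 < r.val) :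
    piq (Mv (r, r.neg)) = (-X : ℤ[X]) • piq (Mv (r.sub1, r.sub1.neg))
      - (X : ℤ[X]) • piq (Mv (r.sub1.neg, r.sub1)) - (X ^ 2 : ℤ[X]) • piq (Mv (r.neg, r)) := by
  have h0 := piq_eq_zero_of_mem_Kgen (.inl (.inr ⟨r, h, rfl⟩))
  rw [piq_add, piq_add, piq_smul, piq_smul, piq_add, smul_add, ← X_smul_eq_qq_smul,
    ← X_smul_eq_qq_smul, ← ofIntPoly_X, ← map_pow, ← intPoly_smul_def] at h0
  rw [← sub_eq_zero, ← h0]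
  module

lemma piq_half :
    piq (Mv (HO.half, HO.half.neg)) = (-X ^ 2 : ℤ[X]) • piq (Mv (HO.half.neg, HO.half)) := by
  have h0 := piq_eq_zero_of_mem_Kgen (.inr rfl)
  rw [piq_add, piq_smul, ← ofIntPoly_X, ← map_pow, ← intPoly_smul_def] at h0
  rw [neg_smul]
  exact eq_neg_of_add_eq_zero_left h0

def qIncSpan : Submodule ℤ[X] Quot2 :=
  Ideal.span {(X : ℤ[X])} •
    Submodule.span ℤ[X] (Set.range fun μ : {μ : HO × HO // μ.1 < μ.2} => piq (Mv μ))

lemma smul_piq_mem_qIncSpan {d : ℤ[X]} (hd : (X : ℤ[X]) ∣ d) {r s : HO} (h : r < s) :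
    d • piq (Mv (r, s)) ∈ qIncSpan :=
  Submodule.smul_mem_smul (Ideal.mem_span_singleton.2 hd)
    (Submodule.subset_span ⟨⟨(r, s), h⟩, rfl⟩)

lemma piq_neg_mem_qIncSpan {r : HO} (hr : 0 < r.val) : piq (Mv (r, r.neg)) ∈ qIncSpan := by
  obtain ⟨k, hk⟩ := HO.exists_nat_of_pos hr
  induction k generalizing r with
  | zero =>
    obtain rfl : r = HO.half := Subtype.ext (by rw [hk]; norm_num [HO.half])
    rw [piq_half]
    exact smul_piq_mem_qIncSpan (by simp) (HO.neg_lt_self (by norm_num [HO.half]))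
  | succ k ih =>
    have hk' : r.sub1.val = k + 1 / 2 := by simp only [HO.sub1, hk]; push_cast; ring
    have hpos : (0 : ℚ) < r.sub1.val := by rw [hk']; positivity
    rw [piq_neg_of_half_lt (by rw [hk]; push_cast; linarith)]
    refine sub_mem (sub_mem ?_ ?_) ?_
    · exact Submodule.smul_of_tower_mem _ _ (ih hpos hk')
    · exact smul_piq_mem_qIncSpan (dvd_refl _) (HO.neg_lt_self hpos)
    · exact smul_piq_mem_qIncSpan (dvd_pow_self _ two_ne_zero) (HO.neg_lt_self hr)

lemma piq_mem_qIncSpan_of_le {l1 l2 : HO} (h : l2 ≤ l1) : piq (Mv (l1, l2)) ∈ qIncSpan := by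
  obtain rfl | hlt := eq_or_lt_of_le h
  · rw [piq_diag]; exact zero_mem _
  by_cases hsum : l1.val + l2.val = 0
  · obtain rfl : l2 = l1.neg := Subtype.ext (show l2.val = -l1.val by linarith)
    exact piq_neg_mem_qIncSpan (by have : -l1.val < l1.val := hlt; linarith)
  · rw [piq_of_lt hlt hsum]
    exact smul_piq_mem_qIncSpan (by simp) hlt

lemma exists_sum_of_mem_qIncSpan {x : Quot2} (hx : x ∈ qIncSpan) :
    ∃ (S : Finset (HO × HO)) (c : HO × HO → ℤ[X]), (∀ p ∈ S, p.1 < p.2) ∧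
      (∀ p, (c p).coeff 0 = 0) ∧ x = ∑ p ∈ S, ofIntPoly (c p) • piq (Mv p) := by
  rw [qIncSpan, Submodule.mem_ideal_smul_span_iff_exists_sum] at hx
  obtain ⟨a, ha, rfl⟩ := hx
  let e := Function.Embedding.subtype fun μ : HO × HO => μ.1 < μ.2
  refine ⟨(a.embDomain e).support, a.embDomain e, ?_, fun p => ?_, ?_⟩
  · intro p hp
    obtain ⟨μ, -, rfl⟩ := Finset.mem_map.1 (Finsupp.support_embDomain e a ▸ hp)
    exact μ.2
  · rw [← X_dvd_iff, ← Ideal.mem_span_singleton]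
    by_cases hp : p ∈ Set.range e
    · obtain ⟨μ, rfl⟩ := hp
      rw [Finsupp.embDomain_apply_self]; exact ha μ
    · rw [Finsupp.embDomain_of_notMem_range _ _ _ hp]; exact zero_mem _
  · change _ = (a.embDomain e).sum fun p d => ofIntPoly d • piq (Mv p)
    rw [Finsupp.sum_embDomain]
    rfl

lemma mem_span_increasing_of_mem_qIncSpan {x : Quot2} (hx : x ∈ qIncSpan) :
    x ∈ Submodule.span Kq ((fun p : HO × HO => piq (Mv p)) '' {p | p.1 < p.2}) := by
  obtain ⟨S, c, hS, -, rfl⟩ := exists_sum_of_mem_qIncSpan hx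
  exact Submodule.sum_mem _ fun μ hμ =>
    Submodule.smul_mem _ _ (Submodule.subset_span ⟨μ, hS μ hμ, rfl⟩)

lemma span_piq_Mv_eq_top : Submodule.span Kq (Set.range fun p => piq (Mv p)) = ⊤ := by
  have hMv : Submodule.span Kq (Set.range Mv) = ⊤ := by
    rw [← Finsupp.basisSingleOne.span_eq, Finsupp.coe_basisSingleOne]
    rfl
  change Submodule.span Kq (Set.range (Ksub.mkQ ∘ Mv)) = ⊤
  rw [Set.range_comp, Submodule.span_image, hMv, Submodule.map_top, Submodule.range_mkQ]

lemma span_increasing_eq_top :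
    Submodule.span Kq ((fun p : HO × HO => piq (Mv p)) '' {p | p.1 < p.2}) = ⊤ := by
  rw [eq_top_iff, ← span_piq_Mv_eq_top, Submodule.span_le]
  rintro _ ⟨p, rfl⟩
  by_cases h : p.1 < p.2
  · exact Submodule.subset_span ⟨p, h, rfl⟩
  · exact mem_span_increasing_of_mem_qIncSpan (piq_mem_qIncSpan_of_le (not_lt.1 h))

/-- In `𝕋²/𝕂²`, the images of `v_r ⊗ v_s` for `r < s` span, and more precisely the
image of `v_{λ_1} ⊗ v_{λ_2}` for `λ_1 ≥ λ_2` is a `q·ℤ[q]`-linear combination of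
images of `v_{μ_1} ⊗ v_{μ_2}` with `μ_1 < μ_2`. -/
theorem quotient_spanned_by_increasing :
    (Submodule.span Kq ((fun p : HO × HO => piq (Mv p)) '' {p | p.1 < p.2}) = ⊤) ∧
    ∀ l1 l2 : HO, l2 ≤ l1 →
      ∃ (S : Finset (HO × HO)) (c : HO × HO → Polynomial ℤ),
        (∀ p ∈ S, p.1 < p.2) ∧ (∀ p, (c p).coeff 0 = 0) ∧
        piq (Mv (l1, l2))
          = ∑ p ∈ S,
              (algebraMap (Polynomial ℚ) Kq ((c p).map (Int.castRingHom ℚ))) • piq (Mv p) :=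
  ⟨span_increasing_eq_top, fun _ _ h => exists_sum_of_mem_qIncSpan (piq_mem_qIncSpan_of_le h)⟩

end
end

section
/- Define ℤ[q,q^{-1}]-valued 'bar involution' coefficients on the rank-2 tensor space by the formulas: for r ≤ s with r+s ≠ 0, bar(M_{(r,s)}) = M_{(r,s)}; for r > s with r+s ≠ 0, bar(M_{(r,s)}) = M_{(r,s)} + (q - q^{-1}) M_{(s,r)}; for r > 0, bar(M_{(-r,r)}) = M_{(-r,r)} + Σ_{s>r} (q - q^{-1})(-q)^{r+1-s} M_{(-s,s)}; and for r > 0, bar(M_{(r,-r)}) = M_{(r,-r)} + q(q-q^{-1}) M_{(-r,r)} + Σ_{0<s<r} (q-q^{-1})(-q)^{s+1-r} M_{(s,-s)} + Σ_{s<0} q^{-1}(q-q^{-1})(-q)^{s+1-r} M_{(s,-s)} (indices r, s ranging over half-odd-integers). Then this map, extended ℚ-linearly together with q ↦ q^{-1}, is an involution on the completed space (i.e., applying it twice gives the identity on each M_λ). -/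
/-! The matrix of `bar` is block diagonal. For `r + s ≠ 0` the blocks are `{(r,s), (s,r)}`, on
which `bar ∘ bar = id` reduces to `invert (q - q⁻¹) = -(q - q⁻¹)`. On the antidiagonal
`M_{(t,-t)}`, indexed by `i ∈ ℤ` through `t = i + 1/2`, the matrix is lower unitriangular with
strictly lower part `g = antidiagCoeff`, and `bar ∘ bar = id` means
`g i k + ḡ i k + ∑_{k<j<i} ḡ i j * g j k = 0` for `k < i`. Since
`(q - q⁻¹)(-q)^m = (-q)^(m-1) - (-q)^(m+1)` these sums telescope; when `i ≥ 0 > k`, the term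
`q(q - q⁻¹) M_{(-t,t)}` and the factor `q⁻¹` on negative indices produce boundary terms that
cancel each other. -/

noncomputable section
open Finset LaurentPolynomial

/-- Laurent polynomials `ℤ[q,q⁻¹]`. -/
abbrev Lq : Type := LaurentPolynomial ℤ

def qL : Lq := LaurentPolynomial.T 1
def qLinv : Lq := LaurentPolynomial.T (-1)

/-- `(-q)^z` for `z ∈ ℤ`. -/
def negqpow (z : ℤ) : Lq := (if Even z then 1 else -1) * LaurentPolynomial.T z

/-- The coefficient of `M_μ` in `bar(M_λ)` (indices are pairs of half-odd-integers):
`bar M_{(r,s)} = M_{(r,s)}` for `r ≤ s`, `r+s ≠ 0`;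
`bar M_{(r,s)} = M_{(r,s)} + (q-q⁻¹) M_{(s,r)}` for `r > s`, `r+s ≠ 0`;
`bar M_{(-t,t)} = M_{(-t,t)} + Σ_{u>t} (q-q⁻¹)(-q)^{t+1-u} M_{(-u,u)}` for `t > 0`;
`bar M_{(t,-t)} = M_{(t,-t)} + q(q-q⁻¹) M_{(-t,t)}
  + Σ_{0<u<t} (q-q⁻¹)(-q)^{u+1-t} M_{(u,-u)}
  + Σ_{u<0} q⁻¹(q-q⁻¹)(-q)^{u+1-t} M_{(u,-u)}` for `t > 0`. -/
def Bc (l m : HO × HO) : Lq :=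
  let r := l.1; let s := l.2
  if r.val + s.val ≠ 0 then
    if r ≤ s then (if m = l then 1 else 0)
    else (if m = l then 1 else 0) + (if m = (s, r) then qL - qLinv else 0)
  else if r.val < 0 then
    (if m = l then 1 else 0) +
      (if m.2 = HO.neg m.1 ∧ m.1.val < 0 ∧ s.val < m.2.val then
        (qL - qLinv) * negqpow ⌊s.val + 1 - m.2.val⌋ else 0)
  else
    (if m = l then 1 else 0) +
    (if m = (s, r) then qL * (qL - qLinv) else 0) +
    (if m.2 = HO.neg m.1 ∧ 0 < m.1.val ∧ m.1.val < r.val then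
      (qL - qLinv) * negqpow ⌊m.1.val + 1 - r.val⌋ else 0) +
    (if m.2 = HO.neg m.1 ∧ m.1.val < 0 then
      qLinv * (qL - qLinv) * negqpow ⌊m.1.val + 1 - r.val⌋ else 0)


lemma negqpow_add (x y : ℤ) : negqpow (x + y) = negqpow x * negqpow y := by
  unfold negqpow
  rw [T_add]
  split_ifs with hxy <;> first | ring1 | (rw [Int.even_add] at hxy; tauto)

lemma negqpow_zero : negqpow 0 = 1 := by simp [negqpow]

lemma negqpow_one : negqpow 1 = -qL := by simp [negqpow, qL]

lemma negqpow_neg_one : negqpow (-1) = -qLinv := by simp [negqpow, qLinv]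

lemma qL_mul_negqpow (m : ℤ) : qL * negqpow m = -negqpow (m + 1) := by
  rw [negqpow_add, negqpow_one]; ring

lemma qLinv_mul_negqpow (m : ℤ) : qLinv * negqpow m = -negqpow (m - 1) := by
  rw [sub_eq_add_neg, negqpow_add, negqpow_neg_one]; ring

lemma invert_negqpow (z : ℤ) : invert (negqpow z) = negqpow (-z) := by
  by_cases h : Even z <;> simp [negqpow, h]

lemma invert_qL : invert qL = qLinv := by simp [qL, qLinv]

lemma invert_qLinv : invert qLinv = qL := by simp [qL, qLinv]

lemma invert_qL_sub_qLinv : invert (qL - qLinv) = -(qL - qLinv) := by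
  rw [map_sub, invert_qL, invert_qLinv, neg_sub]

lemma qL_sub_qLinv_mul_negqpow (m : ℤ) :
    (qL - qLinv) * negqpow m = negqpow (m - 1) - negqpow (m + 1) := by
  rw [sub_mul, qL_mul_negqpow, qLinv_mul_negqpow, sub_neg_eq_add, neg_add_eq_sub]

lemma sum_Ico_sub_telescope {G : Type*} [AddCommGroup G] (f : ℤ → G) {a b : ℤ} (hab : a ≤ b) :
    ∑ j ∈ Ico a b, (f (j + 1) - f j) = f b - f a := by
  induction b, hab using Int.leInduction with
  | base => simp
  | succ n hn ih =>
    rw [← insert_Ico_right_eq_Ico_add_one hn, sum_insert (by simp), ih]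
    abel

def geomCoeff (i j : ℤ) : Lq := (qL - qLinv) * negqpow (j + 1 - i)

lemma invert_geomCoeff (i j : ℤ) :
    invert (geomCoeff i j) = -(qL - qLinv) * negqpow (i - 1 - j) := by
  rw [geomCoeff, map_mul, invert_qL_sub_qLinv, invert_negqpow, neg_sub]
  ring_nf

lemma sum_Ico_invert_geomCoeff_mul (i k : ℤ) {a b : ℤ} (hab : a ≤ b) :
    ∑ j ∈ Ico a b, invert (geomCoeff i j) * geomCoeff j k
      = (qL - qLinv) * (negqpow (i + k + 1 - 2 * a) - negqpow (i + k + 1 - 2 * b)) := by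
  have hterm : ∀ j, invert (geomCoeff i j) * geomCoeff j k = (qL - qLinv) *
      (-negqpow (i + k + 1 - 2 * (j + 1)) - -negqpow (i + k + 1 - 2 * j)) := fun j => by
    rw [invert_geomCoeff, geomCoeff, neg_mul, neg_mul, mul_mul_mul_comm, ← negqpow_add,
      mul_assoc, qL_sub_qLinv_mul_negqpow]
    ring_nf
  rw [sum_congr rfl fun j _ => hterm j, ← mul_sum,
    sum_Ico_sub_telescope (fun j => -negqpow (i + k + 1 - 2 * j)) hab]
  ring

lemma geomCoeff_add_invert_add_sum {i k : ℤ} (hki : k < i) :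
    geomCoeff i k + invert (geomCoeff i k)
      + ∑ j ∈ Ioo k i, invert (geomCoeff i j) * geomCoeff j k = 0 := by
  rw [← Ico_add_one_left_eq_Ioo, sum_Ico_invert_geomCoeff_mul i k hki, invert_geomCoeff,
    geomCoeff]
  ring_nf

section LowerUnitriangular

variable {ι R : Type*} [LinearOrder ι] [Ring R]

def lowerUnitriangular (g : ι → ι → R) (i j : ι) : R :=
  if i = j then 1 else if j < i then g i j else 0

variable {g : ι → ι → R} {i j k : ι}

lemma lowerUnitriangular_self : lowerUnitriangular g i i = 1 := if_pos rfl

lemma lowerUnitriangular_of_lt (h : j < i) : lowerUnitriangular g i j = g i j := by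
  rw [lowerUnitriangular, if_neg h.ne', if_pos h]

lemma lowerUnitriangular_of_not_le (h : ¬j ≤ i) : lowerUnitriangular g i j = 0 := by
  rw [lowerUnitriangular, if_neg (by grind), if_neg (by grind)]

lemma finsum_map_lowerUnitriangular_mul [LocallyFiniteOrder ι] {F : Type*} [FunLike F R R]
    [RingHomClass F R R] (σ : F)
    (hg : ∀ i k, k < i → g i k + σ (g i k) + ∑ j ∈ Ioo k i, σ (g i j) * g j k = 0) :
    ∑ᶠ j, σ (lowerUnitriangular g i j) * lowerUnitriangular g j k = if i = k then 1 else 0 := by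
  have hsupp : (Function.support fun j =>
      σ (lowerUnitriangular g i j) * lowerUnitriangular g j k) ⊆ Icc k i := by
    intro j hj
    rw [Function.mem_support] at hj
    rw [coe_Icc, Set.mem_Icc]
    by_contra h
    rcases not_and_or.mp h with h | h <;> apply hj
    · rw [lowerUnitriangular_of_not_le h, mul_zero]
    · rw [lowerUnitriangular_of_not_le h, map_zero, zero_mul]
  rw [finsum_eq_sum_of_support_subset _ hsupp]
  rcases lt_trichotomy k i with hki | rfl | hik
  · rw [← Ico_insert_right hki.le, ← Ioo_insert_left hki, sum_insert (by simp [hki.ne']),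
      sum_insert (by simp), if_neg hki.ne', ← hg i k hki]
    rw [lowerUnitriangular_self, lowerUnitriangular_self, lowerUnitriangular_of_lt hki,
      map_one, one_mul, mul_one, ← add_assoc]
    congr 1
    refine sum_congr rfl fun j hj => ?_
    rw [mem_Ioo] at hj
    rw [lowerUnitriangular_of_lt hj.1, lowerUnitriangular_of_lt hj.2]
  · rw [Icc_self, sum_singleton, lowerUnitriangular_self, map_one, one_mul, if_pos rfl]
  · rw [Icc_eq_empty_of_lt hik, sum_empty, if_neg hik.ne]

end LowerUnitriangular

-- For `j < i`, the coefficient of `M_{(j+1/2, -j-1/2)}` in `bar M_{(i+1/2, -i-1/2)}`.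
def antidiagCoeff (i j : ℤ) : Lq :=
  if 0 ≤ i ∧ j < 0 then (if j = -1 - i then qL * (qL - qLinv) else 0) + qLinv * geomCoeff i j
  else geomCoeff i j

lemma antidiagCoeff_eq_geomCoeff (i j : ℤ) (h : ¬(0 ≤ i ∧ j < 0)) :
    antidiagCoeff i j = geomCoeff i j :=
  if_neg h

lemma antidiagCoeff_add_invert_add_sum_of_nonneg_of_neg {i k : ℤ} (hi : 0 ≤ i) (hk : k < 0) :
    antidiagCoeff i k + invert (antidiagCoeff i k)
      + ∑ j ∈ Ioo k i, invert (antidiagCoeff i j) * antidiagCoeff j k = 0 := by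
  have hneg : ∑ j ∈ Ico (k + 1) 0, invert (antidiagCoeff i j) * antidiagCoeff j k
      = (if -1 - i ∈ Ico (k + 1) 0 then invert (qL * (qL - qLinv)) * geomCoeff (-1 - i) k else 0)
        + qL * ∑ j ∈ Ico (k + 1) 0, invert (geomCoeff i j) * geomCoeff j k := by
    rw [← sum_ite_eq' (Ico (k + 1) 0) (-1 - i)
      (fun j => invert (qL * (qL - qLinv)) * geomCoeff j k), mul_sum, ← sum_add_distrib]
    refine sum_congr rfl fun j hj => ?_
    rw [mem_Ico] at hj
    rw [antidiagCoeff, if_pos ⟨hi, hj.2⟩, antidiagCoeff_eq_geomCoeff j k (by omega), map_add,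
      map_mul, invert_qLinv, apply_ite invert, map_zero, add_mul, ite_mul, zero_mul, mul_assoc]
  have hpos : ∑ j ∈ Ico 0 i, invert (antidiagCoeff i j) * antidiagCoeff j k
      = (if -1 - k ∈ Ico 0 i then invert (geomCoeff i (-1 - k)) * (qL * (qL - qLinv)) else 0)
        + qLinv * ∑ j ∈ Ico 0 i, invert (geomCoeff i j) * geomCoeff j k := by
    rw [← sum_ite_eq' (Ico 0 i) (-1 - k)
      (fun j => invert (geomCoeff i j) * (qL * (qL - qLinv))), mul_sum, ← sum_add_distrib]
    refine sum_congr rfl fun j hj => ?_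
    rw [mem_Ico] at hj
    rw [antidiagCoeff_eq_geomCoeff i j (by omega), antidiagCoeff, if_pos ⟨hj.1, hk⟩]
    split_ifs <;> first | ring1 | omega
  rw [← Ico_add_one_left_eq_Ioo, ← Ico_union_Ico_eq_Ico (by omega : k + 1 ≤ 0) hi,
    sum_union (Ico_disjoint_Ico_consecutive _ _ _), hneg, hpos,
    sum_Ico_invert_geomCoeff_mul i k (by omega), sum_Ico_invert_geomCoeff_mul i k hi]
  simp only [antidiagCoeff, if_pos (And.intro hi hk), map_add, map_mul, apply_ite invert,
    map_zero, invert_qL, invert_qLinv, invert_qL_sub_qLinv, invert_negqpow, geomCoeff, mem_Ico]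
  split_ifs with h₁ <;> try omega
  · subst h₁
    linear_combination (norm := ring_nf) (-(qL - qLinv) ^ 2) * negqpow_zero
  · linear_combination (norm := ring_nf) (-(qL - qLinv) ^ 2) * qLinv_mul_negqpow (k + i + 2)
  · linear_combination (norm := ring_nf) (-(qL - qLinv) ^ 2) * qL_mul_negqpow (k + i)

lemma antidiagCoeff_add_invert_add_sum {i k : ℤ} (hki : k < i) :
    antidiagCoeff i k + invert (antidiagCoeff i k)
      + ∑ j ∈ Ioo k i, invert (antidiagCoeff i j) * antidiagCoeff j k = 0 := by
  by_cases h : 0 ≤ i ∧ k < 0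
  · exact antidiagCoeff_add_invert_add_sum_of_nonneg_of_neg h.1 h.2
  have hgeom : ∀ j ∈ Ioo k i, invert (antidiagCoeff i j) * antidiagCoeff j k
      = invert (geomCoeff i j) * geomCoeff j k := fun j hj => by
    rw [mem_Ioo] at hj
    rw [antidiagCoeff_eq_geomCoeff i j (by omega), antidiagCoeff_eq_geomCoeff j k (by omega)]
  rw [sum_congr rfl hgeom, antidiagCoeff_eq_geomCoeff i k h]
  exact geomCoeff_add_invert_add_sum hki

lemma finsum_eq_finsum_comp_of_support_subset_range {α β M : Type*} [AddCommMonoid M]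
    {f : α → M} {g : β → α} (hg : Function.Injective g) (hf : Function.support f ⊆ Set.range g) :
    ∑ᶠ a, f a = ∑ᶠ b, f (g b) := by
  rw [← finsum_mem_univ, ← finsum_mem_range hg]
  exact finsum_mem_inter_support_eq' f _ _ fun a ha => iff_of_true trivial (hf ha)

namespace HO

def ofInt : ℤ ≃ HO where
  toFun k := ⟨k + 1/2, k, rfl⟩
  invFun r := ⌊r.val⌋
  left_inv k := by norm_num
  right_inv := by
    rintro ⟨_, k, rfl⟩
    norm_num

lemma ofInt_val (k : ℤ) : (ofInt k).val = k + 1/2 := rfl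

lemma neg_ofInt (k : ℤ) : (ofInt k).neg = ofInt (-1 - k) := by
  ext
  simp only [neg, ofInt_val]
  push_cast
  ring

lemma neg_neg (r : HO) : r.neg.neg = r := by
  ext
  simp [neg]

lemma eq_neg_iff {r s : HO} : s = r.neg ↔ r.val + s.val = 0 := by
  rw [Subtype.ext_iff, neg, add_comm, eq_neg_iff_add_eq_zero]

lemma ofInt_val_lt_zero {a : ℤ} : (ofInt a).val < 0 ↔ a < 0 := by
  rw [ofInt_val]
  constructor <;> intro h
  · exact_mod_cast (by linarith : (a : ℚ) < 0)
  · linarith [show (a : ℚ) ≤ -1 by exact_mod_cast Int.le_sub_one_of_lt h]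

lemma zero_lt_ofInt_val {a : ℤ} : 0 < (ofInt a).val ↔ 0 ≤ a := by
  rw [ofInt_val]
  constructor <;> intro h
  · by_contra h'
    linarith [show (a : ℚ) ≤ -1 by exact_mod_cast (by omega : a ≤ -1)]
  · linarith [show (0 : ℚ) ≤ a by exact_mod_cast h]

lemma ofInt_val_lt_ofInt_val {a b : ℤ} : (ofInt a).val < (ofInt b).val ↔ a < b := by
  simp [ofInt_val]

lemma floor_ofInt_val_add_one_sub (a b : ℤ) :
    ⌊(ofInt a).val + 1 - (ofInt b).val⌋ = a + 1 - b := by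
  rw [ofInt_val, ofInt_val,
    show (a : ℚ) + 1/2 + 1 - (b + 1/2) = ((a + 1 - b : ℤ) : ℚ) by push_cast; ring,
    Int.floor_intCast]

end HO

def antidiagPair (i : ℤ) : HO × HO := (HO.ofInt i, HO.ofInt (-1 - i))

lemma antidiagPair_injective : Function.Injective antidiagPair :=
  fun _ _ h => HO.ofInt.injective (congrArg Prod.fst h)

lemma antidiagPair_snd (i : ℤ) : (antidiagPair i).2 = (antidiagPair i).1.neg :=
  (HO.neg_ofInt i).symm

lemma exists_antidiagPair_eq {l : HO × HO} (hl : l.1.val + l.2.val = 0) :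
    ∃ i, antidiagPair i = l := by
  obtain ⟨i, hi⟩ := HO.ofInt.surjective l.1
  refine ⟨i, Prod.ext hi ?_⟩
  rw [antidiagPair, ← HO.neg_ofInt, hi, eq_comm, HO.eq_neg_iff, hl]

lemma Bc_antidiagPair (i j : ℤ) :
    Bc (antidiagPair i) (antidiagPair j) = lowerUnitriangular antidiagCoeff i j := by
  have hsum : (antidiagPair i).1.val + (antidiagPair i).2.val = 0 :=
    HO.eq_neg_iff.mp (antidiagPair_snd i)
  rw [Bc, if_neg (not_not.mpr hsum)]
  simp only [antidiagPair, lowerUnitriangular, antidiagCoeff, geomCoeff, Prod.mk.injEq,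
    HO.neg_ofInt, Equiv.apply_eq_iff_eq, HO.ofInt_val_lt_zero, HO.zero_lt_ofInt_val,
    HO.ofInt_val_lt_ofInt_val, HO.floor_ofInt_val_add_one_sub, true_and]
  split_ifs <;> first | omega | ring_nf

lemma Bc_eq_zero_of_antidiag {l m : HO × HO} (hl : l.2 = l.1.neg) (hm : m.2 ≠ m.1.neg) :
    Bc l m = 0 := by
  have hml : m ≠ l := fun h => hm (h ▸ hl)
  have hms : m ≠ (l.2, l.1) := fun h => hm (by rw [h, hl, HO.neg_neg])
  simp [Bc, HO.eq_neg_iff.mp hl, hml, hms, hm]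

lemma support_invert_Bc_antidiagPair_mul_subset (i : ℤ) (nu : HO × HO) :
    (Function.support fun m => invert (Bc (antidiagPair i) m) * Bc m nu)
      ⊆ Set.range antidiagPair := by
  intro m hm
  refine exists_antidiagPair_eq (HO.eq_neg_iff.mp ?_)
  by_contra hm'
  rw [Function.mem_support, Bc_eq_zero_of_antidiag (antidiagPair_snd i) hm'] at hm
  simp at hm

lemma Bc_of_val_add_ne_zero {l : HO × HO} (hl : l.1.val + l.2.val ≠ 0) (m : HO × HO) :
    Bc l m = (if m = l then 1 else 0)
      + if m = l.swap then (if l.1 ≤ l.2 then 0 else qL - qLinv) else 0 := by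
  by_cases hle : l.1 ≤ l.2 <;> simp [Bc, hl, hle, Prod.swap]

lemma finsum_invert_Bc_mul_Bc_of_val_add_ne_zero {l : HO × HO} (hl : l.1.val + l.2.val ≠ 0)
    (nu : HO × HO) :
    ∑ᶠ m, invert (Bc l m) * Bc m nu = if l = nu then 1 else 0 := by
  have hsupp : (Function.support fun m => invert (Bc l m) * Bc m nu)
      ⊆ ({l, l.swap} : Finset (HO × HO)) := by
    intro m hm
    contrapose hm
    simp only [coe_insert, coe_singleton, Set.mem_insert_iff, Set.mem_singleton_iff,
      not_or] at hm
    rw [Function.notMem_support, Bc_of_val_add_ne_zero hl, if_neg hm.1, if_neg hm.2]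
    simp
  have hswap : l.swap.1.val + l.swap.2.val ≠ 0 := by rwa [add_comm]
  rw [finsum_eq_sum_of_support_subset _ hsupp]
  simp only [Bc_of_val_add_ne_zero hl, map_add, apply_ite invert, map_one, map_zero, add_mul,
    ite_mul, one_mul, zero_mul, sum_add_distrib, sum_ite_eq', mem_insert, mem_singleton,
    true_or, or_true, if_true]
  rw [Bc_of_val_add_ne_zero hswap]
  by_cases hle : l.1 ≤ l.2
  · simp [hle, eq_comm]
  · simp only [hle, Prod.fst_swap, Prod.snd_swap, le_of_not_ge hle, invert_qL_sub_qLinv,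
      Prod.swap_swap, eq_comm, ↓reduceIte]
    split_ifs <;> ring

/-- The bar map, extended `ℚ`-antilinearly with `q ↦ q⁻¹` (on coefficients, the
involution `invert : ℤ[q,q⁻¹] → ℤ[q,q⁻¹]`, `q ↦ q⁻¹`), is an involution on the
completed rank-2 tensor space: applying it twice fixes each `M_λ`, i.e. for all
`λ, ν` one has `Σ_μ bar(B_{λμ}) · B_{μν} = δ_{λν}`. -/
theorem bar_is_involution (l nu : HO × HO) :
    ∑ᶠ m : HO × HO, (LaurentPolynomial.invert (Bc l m)) * Bc m nu
      = if l = nu then 1 else 0 := by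
  by_cases hl : l.1.val + l.2.val = 0
  swap
  · exact finsum_invert_Bc_mul_Bc_of_val_add_ne_zero hl nu
  obtain ⟨a, rfl⟩ := exists_antidiagPair_eq hl
  rw [finsum_eq_finsum_comp_of_support_subset_range antidiagPair_injective
    (support_invert_Bc_antidiagPair_mul_subset a nu)]
  by_cases hnu : nu.1.val + nu.2.val = 0
  · obtain ⟨c, rfl⟩ := exists_antidiagPair_eq hnu
    simp only [Bc_antidiagPair, antidiagPair_injective.eq_iff]
    exact finsum_map_lowerUnitriangular_mul invert fun _ _ => antidiagCoeff_add_invert_add_sum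
  · rw [if_neg (by rintro rfl; exact hnu hl)]
    refine finsum_eq_zero_of_forall_eq_zero fun i => ?_
    rw [Bc_eq_zero_of_antidiag (antidiagPair_snd i) (mt HO.eq_neg_iff.mp hnu), mul_zero]

end
end

section
/- Define wt_r(λ) = Σ_{i=r}^{n} δ_{λ_i} in the lattice P (with δ_{-a} = -δ_a), and say λ ⪰ μ iff wt_r(λ) - wt_r(μ) ∈ Q^+ for all 1 ≤ r ≤ n and wt_1(λ) = wt_1(μ), where Q^+ is the nonnegative span of the type-C simple roots α_0 = -2δ_{1/2}, α_i = δ_{i-1/2} - δ_{i+1/2}. Then ⪰ is a partial order on Λ_{1/2+ℤ} = (1/2+ℤ)^n, and for λ ⪰ μ the interval {ν : λ ⪰ ν ⪰ μ} is finite. -/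
/-!
Record `q ∈ P` by its tail sums `tail q k = ∑_{j ≥ k} q(δ_{j+1/2})`. This is injective, and every
simple root has nonpositive tails (`α_0` gives `-2` at `k = 0`, `α_i` gives `-1` at `k = i`), so `Q^+`
embeds into the nonpositive cone of the locally finite order `ℕ →₀ ℤ`. Hence `Q^+ ∩ -Q^+ = 0` and
every `{x | a - x ∈ Q^+, x - b ∈ Q^+}` lies in a finite box. Since `λ` is recovered from its partial
weights (`δ_{λ_r} = wt_r λ - wt_{r+1} λ` and `δ` is injective), antisymmetry and finiteness of
intervals follow coordinatewise in `r`; reflexivity and transitivity hold because `Q^+` is a monoid.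
-/

noncomputable section
open Finset

lemma HO.ne_zero (r : HO) : r.val ≠ 0 := by
  obtain ⟨k, hk⟩ := r.2
  rw [hk]; intro h
  have h2 : (2 * k + 1 : ℚ) = 0 := by linarith
  have h3 : (2 * k + 1 : ℤ) = 0 := by exact_mod_cast h2
  omega

/-- Positive half-odd-integers `1/2, 3/2, …`, indexing the basis `δ_r` of `P`. -/
abbrev HOpos : Type := {r : HO // 0 < r.val}

/-- The lattice `P`, with basis `δ_r` for `r ∈ 1/2 + ℤ_{>0}`. -/
abbrev Plat : Type := HOpos →₀ ℤ

/-- `δ_r ∈ P` for any half-odd-integer `r`, with `δ_{-r} = -δ_r`. -/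
def deltaP (r : HO) : Plat :=
  if h : 0 < r.val then Finsupp.single ⟨r, h⟩ 1
  else - Finsupp.single ⟨HO.neg r,
      by simpa [HO.neg] using lt_of_le_of_ne (not_lt.mp h) (HO.ne_zero r)⟩ 1

/-- The positive half-odd-integer `i + 1/2`. -/
def pHO (i : ℕ) : HOpos :=
  ⟨⟨(i : ℚ) + 1/2, (i : ℤ), by push_cast; ring⟩, by positivity⟩

/-- The type-`C` simple roots `α_0 = -2δ_{1/2}`, `α_i = δ_{i-1/2} - δ_{i+1/2}`. -/
def alphaC : ℕ → Plat
  | 0 => -(2 • Finsupp.single (pHO 0) 1)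
  | (i + 1) => Finsupp.single (pHO i) 1 - Finsupp.single (pHO (i + 1)) 1

/-- `Q^+`: the nonnegative span of the simple roots. -/
def Qplus : AddSubmonoid Plat := AddSubmonoid.closure (Set.range alphaC)

/-- `wt_r(λ) = Σ_{i=r}^{n} δ_{λ_i}`. -/
def wt (n : ℕ) (r : Fin n) (lam : Fin n → HO) : Plat :=
  ∑ i ∈ Finset.univ.filter (fun i : Fin n => r ≤ i), deltaP (lam i)

/-- The Bruhat ordering: `λ ⪰ μ` iff `wt_1(λ) = wt_1(μ)` and
`wt_r(λ) - wt_r(μ) ∈ Q^+` for all `r`. -/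
def succeq (n : ℕ) (lam mu : Fin n → HO) : Prop :=
  (∑ i, deltaP (lam i)) = (∑ i, deltaP (mu i)) ∧
    ∀ r : Fin n, wt n r lam - wt n r mu ∈ Qplus

lemma Int.floor_inv_two {α : Type*} [Field α] [LinearOrder α] [IsStrictOrderedRing α]
    [FloorRing α] : ⌊(2⁻¹ : α)⌋ = 0 := by
  norm_num [Int.floor_eq_zero_iff]

def pHOEquiv : ℕ ≃ HOpos where
  toFun := pHO
  invFun e := ⌊e.val.val⌋.toNat
  left_inv j := by simp [pHO, Int.floor_inv_two]
  right_inv := by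
    rintro ⟨⟨x, k, rfl⟩, hpos⟩
    have hk : 0 ≤ k := by
      by_contra! h
      have : (k : ℚ) ≤ -1 := by exact_mod_cast Int.le_sub_one_of_lt h
      simp only at hpos
      linarith
    ext
    simp only [pHO, one_div, Int.floor_intCast_add, Int.floor_inv_two, add_zero, add_left_inj]
    exact_mod_cast Int.toNat_of_nonneg hk

@[simp]
lemma pHOEquiv_symm_pHO (j : ℕ) : pHOEquiv.symm (pHO j) = j := pHOEquiv.symm_apply_apply j

/-- `tail q k = ∑_{j ≥ k} q (δ_{j+1/2})`. -/
def tail : Plat →+ (ℕ →₀ ℤ) :=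
  Finsupp.liftAddHom fun e => ∑ k ∈ range (pHOEquiv.symm e + 1), Finsupp.singleAddHom k

lemma tail_single_apply (e : HOpos) (v : ℤ) (k : ℕ) :
    tail (Finsupp.single e v) k = if k ≤ pHOEquiv.symm e then v else 0 := by
  simp [tail, Finsupp.finsetSum_apply, Finsupp.single_apply]

lemma apply_pHO_eq_tail_sub_tail (q : Plat) (j : ℕ) :
    q (pHO j) = tail q j - tail q (j + 1) := by
  induction q using Finsupp.induction_linear with
  | zero => simp
  | add f g hf hg => simp only [Finsupp.add_apply, map_add, hf, hg]; ring
  | single e v =>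
    obtain ⟨i, rfl⟩ := pHOEquiv.surjective e
    have : pHOEquiv i = pHO j ↔ i = j := pHOEquiv.injective.eq_iff
    simp only [tail_single_apply, Equiv.symm_apply_apply, Finsupp.single_apply, this]
    split_ifs <;> omega

lemma tail_injective : Function.Injective tail := by
  intro q q' h
  ext e
  obtain ⟨j, rfl⟩ := pHOEquiv.surjective e
  exact (apply_pHO_eq_tail_sub_tail q j).trans (h ▸ (apply_pHO_eq_tail_sub_tail q' j).symm)

lemma tail_alphaC_nonpos (i : ℕ) : tail (alphaC i) ≤ 0 := by
  intro k
  cases i with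
  | zero =>
    simp only [alphaC, Finsupp.smul_single, map_neg, Finsupp.coe_neg, Finsupp.coe_zero,
      Pi.neg_apply, Pi.zero_apply, tail_single_apply, pHOEquiv_symm_pHO, Int.nsmul_eq_mul]
    split_ifs <;> omega
  | succ i =>
    simp only [alphaC, map_sub, Finsupp.coe_sub, Finsupp.coe_zero, Pi.sub_apply, Pi.zero_apply,
      tail_single_apply, pHOEquiv_symm_pHO]
    split_ifs <;> omega

lemma tail_nonpos_of_mem_Qplus {q : Plat} (hq : q ∈ Qplus) : tail q ≤ 0 := by
  induction hq using AddSubmonoid.closure_induction with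
  | mem x hx =>
    obtain ⟨i, rfl⟩ := hx
    exact tail_alphaC_nonpos i
  | zero => simp
  | add x y _ _ hx hy => simpa using add_nonpos hx hy

lemma eq_zero_of_mem_Qplus_of_neg_mem {q : Plat} (hq : q ∈ Qplus) (hq' : -q ∈ Qplus) :
    q = 0 := by
  refine tail_injective (le_antisymm (tail_nonpos_of_mem_Qplus hq) ?_)
  simpa using tail_nonpos_of_mem_Qplus hq'

lemma finite_setOf_sub_mem_Qplus (a b : Plat) :
    {x : Plat | a - x ∈ Qplus ∧ x - b ∈ Qplus}.Finite := by
  refine (Set.finite_Icc (tail a) (tail b)).preimage tail_injective.injOn |>.subset ?_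
  rintro x ⟨hax, hxb⟩
  have hax := tail_nonpos_of_mem_Qplus hax
  have hxb := tail_nonpos_of_mem_Qplus hxb
  rw [map_sub, sub_nonpos] at hax hxb
  exact ⟨hax, hxb⟩

lemma HO.neg_injective : Function.Injective HO.neg := fun r s h =>
  Subtype.ext (neg_inj.mp (congrArg Subtype.val h : -r.val = -s.val))

lemma deltaP_injective : Function.Injective deltaP := by
  intro r s h
  unfold deltaP at h
  split_ifs at h with hr hs hs
  · exact congrArg Subtype.val (Finsupp.single_left_injective one_ne_zero h)
  -- the coefficient sum of `δ_r` is the sign of `r`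
  · simpa [Finsupp.sum_neg_index] using congrArg (Finsupp.sum · fun _ v => v) h
  · simpa [Finsupp.sum_neg_index] using congrArg (Finsupp.sum · fun _ v => v) h
  · exact HO.neg_injective
      (congrArg Subtype.val (Finsupp.single_left_injective one_ne_zero (neg_inj.mp h)))

theorem Finset.eq_of_sum_Ici_eq {α M : Type*} [PartialOrder α] [LocallyFiniteOrderTop α]
    [WellFoundedGT α] [AddCancelCommMonoid M] {f g : α → M}
    (h : ∀ a, ∑ i ∈ Ici a, f i = ∑ i ∈ Ici a, g i) : f = g := by
  classical
  funext a
  induction a using WellFoundedGT.induction with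
  | _ a ih =>
    have htail : ∑ i ∈ Ioi a, f i = ∑ i ∈ Ioi a, g i :=
      Finset.sum_congr rfl fun i hi => ih i (Finset.mem_Ioi.mp hi)
    have := h a
    rw [← Ioi_insert, sum_insert (by simp), sum_insert (by simp), htail] at this
    exact add_right_cancel this

lemma wt_injective (n : ℕ) : Function.Injective fun (lam : Fin n → HO) r => wt n r lam := by
  intro lam mu h
  have hδ : deltaP ∘ lam = deltaP ∘ mu :=
    Finset.eq_of_sum_Ici_eq fun r => by simpa [wt, Finset.filter_le_eq_Ici] using congrFun h r
  exact funext fun i => deltaP_injective (congrFun hδ i)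

theorem succeq_partial_order_and_locally_finite_general (n : ℕ) :
    (∀ lam : Fin n → HO, succeq n lam lam) ∧
    (∀ lam mu : Fin n → HO, succeq n lam mu → succeq n mu lam → lam = mu) ∧
    (∀ lam mu nu : Fin n → HO, succeq n lam mu → succeq n mu nu → succeq n lam nu) ∧
    (∀ lam mu : Fin n → HO, succeq n lam mu →
      {nu : Fin n → HO | succeq n lam nu ∧ succeq n nu mu}.Finite) := by
  refine ⟨fun lam => ⟨rfl, fun r => by simp [zero_mem]⟩, ?_, ?_, ?_⟩
  · intro lam mu hlm hml
    refine wt_injective n (funext fun r => sub_eq_zero.mp ?_)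
    exact eq_zero_of_mem_Qplus_of_neg_mem (hlm.2 r) (by simpa using hml.2 r)
  · intro lam mu nu hlm hmn
    exact ⟨hlm.1.trans hmn.1, fun r => sub_add_sub_cancel (wt n r lam) _ (wt n r nu) ▸
      add_mem (hlm.2 r) (hmn.2 r)⟩
  · intro lam mu _
    refine (Set.Finite.pi' fun r => finite_setOf_sub_mem_Qplus (wt n r lam) (wt n r mu)).preimage
      (wt_injective n).injOn |>.subset ?_
    rintro nu ⟨hln, hnm⟩ r
    exact ⟨hln.2 r, hnm.2 r⟩

/-- `⪰` is a partial order on `(1/2+ℤ)^n` (reflexive, antisymmetric, transitive),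
and each interval `{ν : λ ⪰ ν ⪰ μ}` is finite. -/
theorem succeq_partial_order_and_locally_finite (n : ℕ) (hn : 1 ≤ n) :
    (∀ lam : Fin n → HO, succeq n lam lam) ∧
    (∀ lam mu : Fin n → HO, succeq n lam mu → succeq n mu lam → lam = mu) ∧
    (∀ lam mu nu : Fin n → HO, succeq n lam mu → succeq n mu nu → succeq n lam nu) ∧
    (∀ lam mu : Fin n → HO, succeq n lam mu →
      {nu : Fin n → HO | succeq n lam nu ∧ succeq n nu mu}.Finite) :=
  succeq_partial_order_and_locally_finite_general n

end
end
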